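/- arXiv:1402.6092 — 8 statements merged into one kernel-verified Lean document; each statement's English description precedes it below -/
import Mathlib

section
/- For the 2-vertex IFS attractor (F_u, F_v) with parameters a, b, c, d, g_u, g_v > 0, a + g_u + b = 1, c + g_v + d = 1: F_u = F_v if and only if a = c and b = d. -/
/-!
If `F_u = F_v =: F`, then `F` is the attractor of each of the two-map systems
`{a x, b x + a + g_u}` and `{c x, d x + c + g_v}`. Every gap of such an attractor other than the
middle one `[a, a + g_u]` is the image of a gap under one of the two maps, so it is shorter by a
factor `a` or `b`; hence `[a, a + g_u]` is the unique longest gap. Reading off the longest gap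
with respect to both systems gives `g_u = g_v` and `a = c`, whence `b = d`.

Conversely, if the parameters agree then `(F_v, F_u)` solves the same system as `(F_u, F_v)`,
and the system contracts the Hausdorff distance by the factor `max a b < 1`.
-/

open Set Metric
open scoped NNReal ENNReal

section Contraction

variable {X Y : Type*}

-- `K ≠ 0` is needed: for `t = ∅` the left side is `∞`, while `0 * ∞ = 0` in `ℝ≥0∞`.
theorem LipschitzWith.infEDist_image_le [PseudoEMetricSpace X] [PseudoEMetricSpace Y]
    {K : ℝ≥0} {f : X → Y} (hf : LipschitzWith K f) (hK : K ≠ 0) (x : X) (t : Set X) :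
    infEDist (f x) (f '' t) ≤ K * infEDist x t :=
  calc infEDist (f x) (f '' t) ≤ ⨅ y ∈ t, K * edist x y :=
        le_iInf₂ fun y hy => (infEDist_le_edist_of_mem (mem_image_of_mem f hy)).trans (hf x y)
    _ = K * infEDist x t := by
        simp only [infEDist, ENNReal.mul_iInf_of_ne (ENNReal.coe_ne_zero.2 hK) ENNReal.coe_ne_top]

theorem LipschitzWith.hausdorffEDist_image_le [PseudoEMetricSpace X] [PseudoEMetricSpace Y]
    {K : ℝ≥0} {f : X → Y} (hf : LipschitzWith K f) (hK : K ≠ 0) (s t : Set X) :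
    hausdorffEDist (f '' s) (f '' t) ≤ K * hausdorffEDist s t := by
  refine hausdorffEDist_le_of_infEDist ?_ ?_
  · rintro _ ⟨x, hx, rfl⟩
    exact (hf.infEDist_image_le hK x t).trans
      (mul_le_mul_right (infEDist_le_hausdorffEDist_of_mem hx) _)
  · rintro _ ⟨y, hy, rfl⟩
    rw [hausdorffEDist_comm]
    exact (hf.infEDist_image_le hK y s).trans
      (mul_le_mul_right (infEDist_le_hausdorffEDist_of_mem hy) _)

theorem eq_of_eq_union_image_swap [PseudoEMetricSpace X] {K : ℝ≥0} {f g : X → X}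
    (hf : LipschitzWith K f) (hg : LipschitzWith K g) (hK₀ : K ≠ 0) (hK₁ : K < 1) {U V : Set X}
    (hU : IsClosed U) (hV : IsClosed V) (hUV : hausdorffEDist U V ≠ ∞)
    (hU_eq : U = f '' U ∪ g '' V) (hV_eq : V = f '' V ∪ g '' U) : U = V := by
  set E := hausdorffEDist U V
  have hcontract : E ≤ K * E :=
    calc E = hausdorffEDist (f '' U ∪ g '' V) (f '' V ∪ g '' U) := by rw [← hU_eq, ← hV_eq]
      _ ≤ max (hausdorffEDist (f '' U) (f '' V)) (hausdorffEDist (g '' V) (g '' U)) :=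
        hausdorffEDist_union_le
      _ ≤ max (K * E) (K * E) := by
        gcongr
        · exact hf.hausdorffEDist_image_le hK₀ U V
        · rw [hausdorffEDist_comm]; exact hg.hausdorffEDist_image_le hK₀ U V
      _ = K * E := max_self _
  have hE : E = 0 := by
    by_contra hE
    have : (K : ℝ≥0∞) * E < 1 * E := ENNReal.mul_lt_mul_left hE hUV (by exact_mod_cast hK₁)
    exact (one_mul E ▸ this).not_ge hcontract
  exact (hU.hausdorffEDist_zero_iff hV).1 hE

end Contraction

theorem lipschitzWith_mul_add (k c : ℝ) : LipschitzWith ‖k‖₊ fun x : ℝ => k * x + c :=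
  LipschitzWith.of_dist_le_mul fun x y => by
    rw [Real.dist_eq, Real.dist_eq, coe_nnnorm, Real.norm_eq_abs, ← abs_mul]
    exact (congrArg abs (by ring)).le

structure IsGap {α : Type*} [Preorder α] (F : Set α) (p q : α) : Prop where
  left_mem : p ∈ F
  right_mem : q ∈ F
  lt : p < q
  disjoint : Disjoint (Ioo p q) F

theorem IsGap.of_image {α : Type*} [LinearOrder α] {F : Set α} {f : α → α} {p q : α}
    (h : IsGap F (f p) (f q)) (hf : StrictMono f) (hfF : MapsTo f F F) (hp : p ∈ F)
    (hq : q ∈ F) : IsGap F p q where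
  left_mem := hp
  right_mem := hq
  lt := hf.lt_iff_lt.1 h.lt
  disjoint := disjoint_left.2 fun _ hx hxF =>
    disjoint_left.1 h.disjoint ⟨hf hx.1, hf hx.2⟩ (hfF hxF)

structure IsTwoMapAttractor (a b g : ℝ) (F : Set ℝ) : Prop where
  left_pos : 0 < a
  right_pos : 0 < b
  gap_pos : 0 < g
  add_eq_one : a + g + b = 1
  nonempty : F.Nonempty
  isCompact : IsCompact F
  eq_union : F = (fun x => a * x) '' F ∪ (fun x => b * x + (a + g)) '' F

namespace IsTwoMapAttractor

variable {a b g : ℝ} {F : Set ℝ} {x p q : ℝ}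

theorem mem_iff (h : IsTwoMapAttractor a b g F) :
    x ∈ F ↔ (∃ y ∈ F, a * y = x) ∨ ∃ y ∈ F, b * y + (a + g) = x := by
  conv_lhs => rw [h.eq_union]
  simp only [mem_union, mem_image]

theorem left_lt_one (h : IsTwoMapAttractor a b g F) : a < 1 := by
  linarith [h.right_pos, h.gap_pos, h.add_eq_one]

theorem right_lt_one (h : IsTwoMapAttractor a b g F) : b < 1 := by
  linarith [h.left_pos, h.gap_pos, h.add_eq_one]

theorem mul_mem (h : IsTwoMapAttractor a b g F) (hx : x ∈ F) : a * x ∈ F :=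
  h.mem_iff.2 (Or.inl ⟨x, hx, rfl⟩)

theorem mul_add_mem (h : IsTwoMapAttractor a b g F) (hx : x ∈ F) : b * x + (a + g) ∈ F :=
  h.mem_iff.2 (Or.inr ⟨x, hx, rfl⟩)

theorem isLeast_zero (h : IsTwoMapAttractor a b g F) : IsLeast F 0 := by
  obtain ⟨m, hm⟩ := h.isCompact.exists_isLeast h.nonempty
  have ha := h.left_pos
  have hb := h.right_pos
  have hg := h.gap_pos
  have ha₁ := h.left_lt_one
  have hb₁ := h.right_lt_one
  have hm_nonpos : m ≤ 0 := by nlinarith [hm.2 (h.mul_mem hm.1)]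
  have hm_nonneg : 0 ≤ m := by
    rcases h.mem_iff.1 hm.1 with ⟨y, hy, rfl⟩ | ⟨y, hy, rfl⟩
    · nlinarith [hm.2 hy]
    · nlinarith [hm.2 hy]
  exact le_antisymm hm_nonpos hm_nonneg ▸ hm

theorem isGreatest_one (h : IsTwoMapAttractor a b g F) : IsGreatest F 1 := by
  obtain ⟨M, hM⟩ := h.isCompact.exists_isGreatest h.nonempty
  have ha := h.left_pos
  have hb := h.right_pos
  have ha₁ := h.left_lt_one
  have hb₁ := h.right_lt_one
  have hsum := h.add_eq_one
  have hM_ge : 1 ≤ M := by nlinarith [hM.2 (h.mul_add_mem hM.1)]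
  have hM_le : M ≤ 1 := by
    rcases h.mem_iff.1 hM.1 with ⟨y, hy, rfl⟩ | ⟨y, hy, rfl⟩
    · nlinarith [hM.2 hy]
    · nlinarith [hM.2 hy]
  exact le_antisymm hM_le hM_ge ▸ hM

theorem subset_Icc (h : IsTwoMapAttractor a b g F) : F ⊆ Icc 0 1 :=
  fun _ hx => ⟨h.isLeast_zero.2 hx, h.isGreatest_one.2 hx⟩

theorem notMem_Ioo (h : IsTwoMapAttractor a b g F) (hx : x ∈ F) : x ∉ Ioo a (a + g) := by
  rintro ⟨hax, hxa⟩
  rcases h.mem_iff.1 hx with ⟨y, hy, rfl⟩ | ⟨y, hy, rfl⟩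
  · nlinarith [(h.subset_Icc hy).2, h.left_pos]
  · nlinarith [(h.subset_Icc hy).1, h.right_pos]

theorem exists_mul_eq (h : IsTwoMapAttractor a b g F) (hx : x ∈ F) (hxa : x < a + g) :
    ∃ y ∈ F, a * y = x := by
  refine h.mem_iff.1 hx |>.resolve_right ?_
  rintro ⟨y, hy, rfl⟩
  nlinarith [(h.subset_Icc hy).1, h.right_pos]

theorem exists_mul_add_eq (h : IsTwoMapAttractor a b g F) (hx : x ∈ F) (hax : a < x) :
    ∃ y ∈ F, b * y + (a + g) = x := by
  refine h.mem_iff.1 hx |>.resolve_left ?_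
  rintro ⟨y, hy, rfl⟩
  nlinarith [(h.subset_Icc hy).2, h.left_pos]

theorem isGap_middle (h : IsTwoMapAttractor a b g F) : IsGap F a (a + g) where
  left_mem := by simpa using h.mul_mem h.isGreatest_one.1
  right_mem := by simpa using h.mul_add_mem h.isLeast_zero.1
  lt := lt_add_of_pos_right a h.gap_pos
  disjoint := disjoint_left.2 fun _ hx hxF => h.notMem_Ioo hxF hx

theorem isGap_descent (h : IsTwoMapAttractor a b g F) (hpq : IsGap F p q) :
    (p = a ∧ q = a + g) ∨ ∃ p' q', IsGap F p' q' ∧ q - p ≤ max a b * (q' - p') := by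
  have hp := hpq.left_mem
  have hq := hpq.right_mem
  have hlt := hpq.lt
  rcases le_or_gt q a with hqa | haq
  · obtain ⟨p', hp', rfl⟩ := h.exists_mul_eq hp (by linarith [h.gap_pos])
    obtain ⟨q', hq', rfl⟩ := h.exists_mul_eq hq (by linarith [h.gap_pos])
    have hgap : IsGap F p' q' :=
      hpq.of_image (f := fun x => a * x) (strictMono_mul_left_of_pos h.left_pos)
        (fun _ => h.mul_mem) hp' hq'
    refine Or.inr ⟨p', q', hgap, ?_⟩
    nlinarith [le_max_left a b, hgap.lt]
  rcases le_or_gt (a + g) p with hgp | hpg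
  · obtain ⟨p', hp', rfl⟩ := h.exists_mul_add_eq hp (by linarith [h.gap_pos])
    obtain ⟨q', hq', rfl⟩ := h.exists_mul_add_eq hq (by linarith [h.gap_pos])
    have hgap : IsGap F p' q' :=
      hpq.of_image (f := fun x => b * x + (a + g))
        ((strictMono_mul_left_of_pos h.right_pos).add_const _) (fun _ => h.mul_add_mem) hp' hq'
    refine Or.inr ⟨p', q', hgap, ?_⟩
    nlinarith [le_max_right a b, hgap.lt]
  have hap : a ≤ p := not_lt.1 fun hpa =>
    disjoint_left.1 hpq.disjoint ⟨hpa, haq⟩ h.isGap_middle.left_mem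
  have hqg : q ≤ a + g := not_lt.1 fun hgq =>
    disjoint_left.1 hpq.disjoint ⟨hpg, hgq⟩ h.isGap_middle.right_mem
  have hpa : p ≤ a := not_lt.1 fun hap' => h.notMem_Ioo hp ⟨hap', hpg⟩
  have hgq : a + g ≤ q := not_lt.1 fun hqg' => h.notMem_Ioo hq ⟨haq, hqg'⟩
  exact Or.inl ⟨le_antisymm hpa hap, le_antisymm hqg hgq⟩

/-- Iterating the descent on a gap longer than `g` would produce gaps of length
`(q - p) / (max a b) ^ n`, eventually longer than `1`. -/
theorem sub_le_of_isGap (h : IsTwoMapAttractor a b g F) (hpq : IsGap F p q) : q - p ≤ g := by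
  by_contra! hlong
  set r := max a b
  have hr₀ : 0 < r := lt_max_of_lt_left h.left_pos
  have hr₁ : r < 1 := max_lt h.left_lt_one h.right_lt_one
  have grow : ∀ n : ℕ, ∃ p' q', IsGap F p' q' ∧ q - p ≤ r ^ n * (q' - p') := by
    intro n
    induction n with
    | zero => exact ⟨p, q, hpq, by simp⟩
    | succ n ih =>
      obtain ⟨p', q', hgap, hle⟩ := ih
      have hrn : r ^ n ≤ 1 := pow_le_one₀ hr₀.le hr₁.le
      have hrn₀ : 0 < r ^ n := pow_pos hr₀ n
      rcases h.isGap_descent hgap with ⟨hp', hq'⟩ | ⟨p'', q'', hgap', hle'⟩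
      · rw [hp', hq', add_sub_cancel_left] at hle
        nlinarith [h.gap_pos]
      · exact ⟨p'', q'', hgap', by rw [pow_succ, mul_assoc]; nlinarith⟩
  obtain ⟨n, hn⟩ := exists_pow_lt_of_lt_one (x := q - p) (by linarith [h.gap_pos]) hr₁
  obtain ⟨p', q', hgap, hle⟩ := grow n
  nlinarith [(h.subset_Icc hgap.left_mem).1, (h.subset_Icc hgap.right_mem).2, pow_pos hr₀ n]

theorem left_eq_of_isGap_of_le_sub (h : IsTwoMapAttractor a b g F) (hpq : IsGap F p q)
    (hlong : g ≤ q - p) : p = a := by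
  rcases h.isGap_descent hpq with ⟨rfl, -⟩ | ⟨p', q', hgap, hle⟩
  · rfl
  · have hr₁ : max a b < 1 := max_lt h.left_lt_one h.right_lt_one
    nlinarith [h.sub_le_of_isGap hgap, h.gap_pos, hgap.lt]

theorem params_eq {c d g' : ℝ} (h : IsTwoMapAttractor a b g F)
    (h' : IsTwoMapAttractor c d g' F) : a = c ∧ b = d := by
  have hg : g ≤ g' := by simpa using h'.sub_le_of_isGap h.isGap_middle
  have hg' : g' ≤ g := by simpa using h.sub_le_of_isGap h'.isGap_middle
  have hac : c = a := h.left_eq_of_isGap_of_le_sub h'.isGap_middle (by linarith)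
  exact ⟨hac.symm, by linarith [h.add_eq_one, h'.add_eq_one]⟩

end IsTwoMapAttractor

/-- For the 2-vertex IFS attractor, `F_u = F_v` if and only if `a = c` and `b = d`. -/
theorem two_vertex_attractor_eq_iff_params_eq
    (a b c d gu gv : ℝ)
    (ha : 0 < a) (hb : 0 < b) (hc : 0 < c) (hd : 0 < d)
    (hgu : 0 < gu) (hgv : 0 < gv)
    (hsum1 : a + gu + b = 1) (hsum2 : c + gv + d = 1)
    (Fu Fv : Set ℝ)
    (hFune : Fu.Nonempty) (hFucpt : IsCompact Fu)
    (hFvne : Fv.Nonempty) (hFvcpt : IsCompact Fv)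
    (hinvu : Fu = (fun x => a * x) '' Fu ∪ (fun x => b * x + (a + gu)) '' Fv)
    (hinvv : Fv = (fun x => c * x) '' Fv ∪ (fun x => d * x + (c + gv)) '' Fu) :
    Fu = Fv ↔ (a = c ∧ b = d) := by
  constructor
  · rintro rfl
    exact IsTwoMapAttractor.params_eq ⟨ha, hb, hgu, hsum1, hFune, hFucpt, hinvu⟩
      ⟨hc, hd, hgv, hsum2, hFune, hFucpt, hinvv⟩
  · rintro ⟨rfl, rfl⟩
    obtain rfl : gu = gv := by linarith
    have hK₁ : max ‖a‖₊ ‖b‖₊ < 1 := by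
      simp only [max_lt_iff, ← NNReal.coe_lt_one, coe_nnnorm, Real.norm_eq_abs,
        abs_of_pos ha, abs_of_pos hb]
      constructor <;> linarith
    refine eq_of_eq_union_image_swap (K := max ‖a‖₊ ‖b‖₊)
      (by simpa using (lipschitzWith_mul_add a 0).weaken (le_max_left _ _))
      ((lipschitzWith_mul_add b (a + gu)).weaken (le_max_right _ _))
      (ne_of_gt (lt_max_of_lt_left (nnnorm_pos.2 ha.ne'))) hK₁ hFucpt.isClosed hFvcpt.isClosed
      (hausdorffEDist_ne_top_of_nonempty_of_bounded hFune hFvne hFucpt.isBounded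
        hFvcpt.isBounded) hinvu hinvv
end

section
/- For the 2-vertex IFS attractor (F_u, F_v) with parameters a, b, c, d, g_u, g_v as above, the interval (a, a + g_u) is disjoint from F_u, and both a and a + g_u belong to F_u; i.e., [a, a+g_u] is a gap interval of F_u. -/
open Set

lemma image_mul_left_subset_Iic {A : Set ℝ} {a : ℝ} (ha : 0 ≤ a) (hA : A ⊆ Iic 1) :
    (fun x => a * x) '' A ⊆ Iic a := by
  rintro _ ⟨x, hx, rfl⟩
  exact mul_le_of_le_one_right ha (hA hx)

lemma image_mul_left_add_subset_Ici {B : Set ℝ} {b t : ℝ} (hb : 0 ≤ b) (hB : B ⊆ Ici 0) :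
    (fun x => b * x + t) '' B ⊆ Ici t := by
  rintro _ ⟨x, hx, rfl⟩
  exact le_add_of_nonneg_left (mul_nonneg hb (hB hx))

lemma Ioo_inter_union_eq_empty_of_subset_Iic_of_subset_Ici {α : Type*} [Preorder α]
    {S T : Set α} {p q : α} (hS : S ⊆ Iic p) (hT : T ⊆ Ici q) :
    Ioo p q ∩ (S ∪ T) = ∅ := by
  refine eq_empty_of_forall_notMem ?_
  rintro x ⟨⟨hpx, hxq⟩, hxS | hxT⟩
  · exact (hS hxS).not_gt hpx
  · exact (hT hxT).not_gt hxq

theorem two_vertex_attractor_level_one_gap_general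
    (a b gu : ℝ)
    (ha : 0 < a) (hb : 0 < b)
    (Fu Fv : Set ℝ)
    (hFu1 : (1:ℝ) ∈ Fu) (hFusub : Fu ⊆ Set.Icc 0 1)
    (hFv0 : (0:ℝ) ∈ Fv) (hFvsub : Fv ⊆ Set.Icc 0 1)
    (hinvu : Fu = (fun x => a * x) '' Fu ∪ (fun x => b * x + (a + gu)) '' Fv) :
    a ∈ Fu ∧ a + gu ∈ Fu ∧ Set.Ioo a (a + gu) ∩ Fu = ∅ := by
  refine ⟨?_, ?_, ?_⟩ <;> rw [hinvu]
  · exact Or.inl ⟨1, hFu1, mul_one a⟩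
  · exact Or.inr ⟨0, hFv0, by ring⟩
  · exact Ioo_inter_union_eq_empty_of_subset_Iic_of_subset_Ici
      (image_mul_left_subset_Iic ha.le fun _ hx => (hFusub hx).2)
      (image_mul_left_add_subset_Ici hb.le fun _ hx => (hFvsub hx).1)

/-- `[a, a+g_u]` is a gap interval of `F_u`: `a, a+g_u ∈ F_u` and
`(a, a+g_u) ∩ F_u = ∅`. -/
theorem two_vertex_attractor_level_one_gap
    (a b c d gu gv : ℝ)
    (ha : 0 < a) (hb : 0 < b) (hc : 0 < c) (hd : 0 < d)
    (hgu : 0 < gu) (hgv : 0 < gv)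
    (hsum1 : a + gu + b = 1) (hsum2 : c + gv + d = 1)
    (Fu Fv : Set ℝ)
    (hFune : Fu.Nonempty) (hFucpt : IsCompact Fu)
    (hFvne : Fv.Nonempty) (hFvcpt : IsCompact Fv)
    (hFu0 : (0:ℝ) ∈ Fu) (hFu1 : (1:ℝ) ∈ Fu) (hFusub : Fu ⊆ Set.Icc 0 1)
    (hFv0 : (0:ℝ) ∈ Fv) (hFv1 : (1:ℝ) ∈ Fv) (hFvsub : Fv ⊆ Set.Icc 0 1)
    (hinvu : Fu = (fun x => a * x) '' Fu ∪ (fun x => b * x + (a + gu)) '' Fv)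
    (hinvv : Fv = (fun x => c * x) '' Fv ∪ (fun x => d * x + (c + gv)) '' Fu) :
    a ∈ Fu ∧ a + gu ∈ Fu ∧ Set.Ioo a (a + gu) ∩ Fu = ∅ :=
  two_vertex_attractor_level_one_gap_general a b gu ha hb Fu Fv hFu1 hFusub hFv0 hFvsub hinvu
end

section
/- Let a, c ∈ (0,1) and b, d ∈ (0,1) with 0 < a + b < 1 and 0 < c + d < 1. Define f(t) = (a^t − 1)(c^t − 1) − b^t d^t for t ∈ [0,1]. Then f(0) = −1 < 0 and f(1) = (a−1)(c−1) − bd > 0, and there exists a unique s ∈ (0,1) with f(s) = 0. -/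
open Real Set

lemma hasDerivAt_constRpow {p : ℝ} (hp : 0 < p) (t : ℝ) :
    HasDerivAt (fun t : ℝ => p ^ t) (p ^ t * Real.log p) t := by
  have he : (fun t : ℝ => Real.exp (Real.log p * t)) = fun t : ℝ => p ^ t := by
    funext x; rw [Real.rpow_def_of_pos hp]
  have hlin : HasDerivAt (fun t : ℝ => Real.log p * t) (Real.log p) t := by
    simpa using (hasDerivAt_id t).const_mul (Real.log p)
  have h : HasDerivAt (fun t : ℝ => Real.exp (Real.log p * t))
      (Real.exp (Real.log p * t) * Real.log p) t :=
    (Real.hasDerivAt_exp (Real.log p * t)).comp t hlin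
  rw [he] at h
  rw [Real.rpow_def_of_pos hp]
  exact h

lemma strictMonoOn_sub_rpow {p q : ℝ} (hp : 1 < p) (hq : 0 < q) (hqp : q < p) :
    StrictMonoOn (fun t : ℝ => p ^ t - q ^ t) (Set.Ici 0) := by
  have hp0 : (0:ℝ) < p := lt_trans one_pos hp
  have hdiff : ∀ t : ℝ, DifferentiableAt ℝ (fun t : ℝ => p ^ t - q ^ t) t := fun t =>
    ((hasDerivAt_constRpow hp0 t).differentiableAt).sub
      ((hasDerivAt_constRpow hq t).differentiableAt)
  apply strictMonoOn_of_deriv_pos (convex_Ici 0)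
    (fun t _ => (hdiff t).continuousAt.continuousWithinAt)
  intro t ht
  rw [interior_Ici] at ht
  rw [deriv_fun_sub ((hasDerivAt_constRpow hp0 t).differentiableAt)
      ((hasDerivAt_constRpow hq t).differentiableAt),
    (hasDerivAt_constRpow hp0 t).deriv, (hasDerivAt_constRpow hq t).deriv]
  have hlp : 0 < Real.log p := Real.log_pos hp
  have hqt : 0 < q ^ t := Real.rpow_pos_of_pos hq t
  have hpt : q ^ t < p ^ t := Real.rpow_lt_rpow hq.le hqp ht
  rcases le_or_gt q 1 with h1 | h1
  · have h2 : q ^ t * Real.log q ≤ 0 :=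
      mul_nonpos_of_nonneg_of_nonpos hqt.le (Real.log_nonpos hq.le h1)
    have h3 : 0 < p ^ t * Real.log p := mul_pos (Real.rpow_pos_of_pos hp0 t) hlp
    linarith
  · have h2 : q ^ t * Real.log q < p ^ t * Real.log p :=
      mul_lt_mul hpt (Real.log_le_log hq hqp.le) (Real.log_pos h1)
        (Real.rpow_pos_of_pos hp0 t).le
    linarith

/-- The dimension equation `(a^t − 1)(c^t − 1) − b^t d^t = 0` satisfies `f(0) = −1 < 0`,
`f(1) > 0`, and has a unique root in `(0,1)`. -/
theorem dimension_equation_unique_root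
    (a b c d : ℝ)
    (ha : a ∈ Set.Ioo (0:ℝ) 1) (hb : b ∈ Set.Ioo (0:ℝ) 1)
    (hc : c ∈ Set.Ioo (0:ℝ) 1) (hd : d ∈ Set.Ioo (0:ℝ) 1)
    (hab : a + b < 1) (hcd : c + d < 1) :
    (a ^ (0:ℝ) - 1) * (c ^ (0:ℝ) - 1) - b ^ (0:ℝ) * d ^ (0:ℝ) = -1 ∧
    0 < (a ^ (1:ℝ) - 1) * (c ^ (1:ℝ) - 1) - b ^ (1:ℝ) * d ^ (1:ℝ) ∧
    ∃! s : ℝ, s ∈ Set.Ioo (0:ℝ) 1 ∧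
      (a ^ s - 1) * (c ^ s - 1) - b ^ s * d ^ s = 0 := by
  obtain ⟨ha0, ha1⟩ := ha
  obtain ⟨hb0, hb1⟩ := hb
  obtain ⟨hc0, hc1⟩ := hc
  obtain ⟨hd0, hd1⟩ := hd
  refine ⟨by simp, ?_, ?_⟩
  · rw [Real.rpow_one, Real.rpow_one, Real.rpow_one, Real.rpow_one]
    nlinarith [mul_pos (sub_pos.2 ha1) (sub_pos.2 hc1)]
  -- the function F
  set F : ℝ → ℝ := fun t => (a ^ t - 1) * (c ^ t - 1) - b ^ t * d ^ t with hF
  have hcont : ∀ p : ℝ, 0 < p → Continuous fun t : ℝ => p ^ t := fun p hp =>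
    continuous_iff_continuousAt.2 fun t =>
      (hasDerivAt_constRpow hp t).differentiableAt.continuousAt
  have hFc : Continuous F := by
    exact (((hcont a ha0).sub continuous_const).mul ((hcont c hc0).sub continuous_const)).sub
      ((hcont b hb0).mul (hcont d hd0))
  -- existence via IVT
  have hF0 : F 0 = -1 := by simp [hF]
  have hF1 : 0 < F 1 := by
    simp only [hF, Real.rpow_one]
    nlinarith [mul_pos (sub_pos.2 ha1) (sub_pos.2 hc1)]
  have hiv := intermediate_value_Ioo (by norm_num : (0:ℝ) ≤ 1) hFc.continuousOn
  have h0mem : (0:ℝ) ∈ Set.Ioo (F 0) (F 1) := by rw [hF0]; exact ⟨by norm_num, hF1⟩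
  obtain ⟨s, hs, hFs⟩ := hiv h0mem
  -- the auxiliary strictly monotone function g
  set g : ℝ → ℝ := fun t => ((1 / b) ^ t - (a / b) ^ t) * ((1 / d) ^ t - (c / d) ^ t) with hg
  have key : ∀ t : ℝ, g t * (b ^ t * d ^ t) = (1 - a ^ t) * (1 - c ^ t) := by
    intro t
    have hbt : (0:ℝ) < b ^ t := Real.rpow_pos_of_pos hb0 t
    have hdt : (0:ℝ) < d ^ t := Real.rpow_pos_of_pos hd0 t
    simp only [hg, Real.div_rpow zero_le_one hb0.le, Real.div_rpow ha0.le hb0.le,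
      Real.div_rpow zero_le_one hd0.le, Real.div_rpow hc0.le hd0.le, Real.one_rpow]
    field_simp
  have hgmono : StrictMonoOn g (Set.Ici 0) := by
    have h1 : StrictMonoOn (fun t : ℝ => (1 / b) ^ t - (a / b) ^ t) (Set.Ici 0) :=
      strictMonoOn_sub_rpow ((one_lt_div hb0).2 hb1) (div_pos ha0 hb0)
        ((div_lt_div_iff_of_pos_right hb0).2 (by linarith))
    have h2 : StrictMonoOn (fun t : ℝ => (1 / d) ^ t - (c / d) ^ t) (Set.Ici 0) :=
      strictMonoOn_sub_rpow ((one_lt_div hd0).2 hd1) (div_pos hc0 hd0)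
        ((div_lt_div_iff_of_pos_right hd0).2 (by linarith))
    have h10 : (fun t : ℝ => (1 / b) ^ t - (a / b) ^ t) 0 = 0 := by simp
    have h20 : (fun t : ℝ => (1 / d) ^ t - (c / d) ^ t) 0 = 0 := by simp
    intro x hx y hy hxy
    have hx1 : 0 ≤ (1 / b) ^ x - (a / b) ^ x := by
      rcases eq_or_lt_of_le (Set.mem_Ici.mp hx) with h | h
      · rw [← h]; simp
      · have := h1 (Set.self_mem_Ici) hx h; rw [h10] at this; exact this.le
    have hx2 : 0 ≤ (1 / d) ^ x - (c / d) ^ x := by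
      rcases eq_or_lt_of_le (Set.mem_Ici.mp hx) with h | h
      · rw [← h]; simp
      · have := h2 (Set.self_mem_Ici) hx h; rw [h20] at this; exact this.le
    exact mul_lt_mul'' (h1 hx hy hxy) (h2 hx hy hxy) hx1 hx2
  -- roots of F in (0,1) correspond to g = 1
  have hroot : ∀ t : ℝ, F t = 0 → g t = 1 := by
    intro t ht
    have hbt : (0:ℝ) < b ^ t := Real.rpow_pos_of_pos hb0 t
    have hdt : (0:ℝ) < d ^ t := Real.rpow_pos_of_pos hd0 t
    have h1 : (1 - a ^ t) * (1 - c ^ t) = b ^ t * d ^ t := by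
      have : (a ^ t - 1) * (c ^ t - 1) - b ^ t * d ^ t = 0 := ht
      nlinarith [this]
    have h2 : g t * (b ^ t * d ^ t) = 1 * (b ^ t * d ^ t) := by
      rw [key t, h1, one_mul]
    exact mul_right_cancel₀ (by positivity) h2
  refine ⟨s, ⟨hs, hFs⟩, ?_⟩
  rintro t ⟨ht, hFt⟩
  exact hgmono.injOn (le_of_lt ht.1) (le_of_lt hs.1) ((hroot t hFt).trans (hroot s hFs).symm)
end

section
/- Let (F_u)_{u∈V} be the attractor of an n-vertex directed graph IFS on ℝ whose directed graph is strongly connected, and fix u ∈ V. If every simple cycle of the directed graph is attached to u (i.e., passes through u), then there exist finitely many contracting similarities T₁, …, T_m : ℝ → ℝ with F_u = ⋃_{i=1}^m T_i(F_u); that is, F_u is the attractor of a standard (1-vertex) IFS. -/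
/-!
Iterating the invariance equation `|V|` times writes every point of `F u` as `S_p(y)`, where `p`
is a walk of length `|V|` from `u` and `y` lies in the component at its end. Such a walk enters `u`
at some step: otherwise two of its edges would end at the same vertex of `V \ {u}`, and the closed
walk between them would avoid `u`, although every closed walk contains a simple cycle. Cutting `p`
there gives a walk `c` from `u` back to `u` of length at most `|V|` with the point in `S_c(F u)`,
while `S_c(F u) ⊆ F u` always. So `F u` is the union of its images under the finitely many
contracting similarities `S_c`.
-/

open Set

def IsContractingSimilarity {X : Type*} [PseudoMetricSpace X] (f : X → X) : Prop :=
  ∃ r : ℝ, 0 < r ∧ r < 1 ∧ ∀ x y, dist (f x) (f y) = r * dist x y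

theorem IsContractingSimilarity.comp {X : Type*} [PseudoMetricSpace X] {f g : X → X}
    (hf : IsContractingSimilarity f) (hg : IsContractingSimilarity g) :
    IsContractingSimilarity (f ∘ g) := by
  obtain ⟨r, hr0, hr1, hfr⟩ := hf
  obtain ⟨s, hs0, hs1, hgs⟩ := hg
  refine ⟨r * s, mul_pos hr0 hs0, by nlinarith, fun x y => ?_⟩
  rw [Function.comp_apply, Function.comp_apply, hfr, hgs, mul_assoc]

theorem exists_fin_family_of_eq_biUnion_image {X : Type*} [NormedAddCommGroup X]
    [NormedSpace ℝ X] {R : Set (X → X)} (hR : R.Finite)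
    (hsim : ∀ f ∈ R, IsContractingSimilarity f) {A : Set X} (hA : A = ⋃ f ∈ R, f '' A) :
    ∃ (m : ℕ) (T : Fin m → X → X), 0 < m ∧ (∀ j, IsContractingSimilarity (T j)) ∧
      A = ⋃ j, T j '' A := by
  rcases R.eq_empty_or_nonempty with rfl | hRne
  · refine ⟨1, fun _ x => (1 / 2 : ℝ) • x, one_pos,
      fun _ => ⟨1 / 2, by norm_num, by norm_num, fun x y => by rw [dist_smul₀]; norm_num⟩, ?_⟩
    simp only [mem_empty_iff_false, iUnion_of_empty, iUnion_empty] at hA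
    simp [hA]
  · have := hR.to_subtype
    obtain ⟨m, ⟨eqv⟩⟩ := Finite.exists_equiv_fin R
    refine ⟨m, fun j => eqv.symm j, Fin.pos_iff_nonempty.mpr (eqv.nonempty_congr.mp
      hRne.to_subtype), fun j => hsim _ (eqv.symm j).2, ?_⟩
    rw [eqv.symm.surjective.iUnion_comp (fun f : R => (f : X → X) '' A)]
    rwa [biUnion_eq_iUnion] at hA

namespace GraphIFS

variable {V E X : Type*} (ie te : E → V)

/-- The walk of length `k` is the edge sequence `q 0, …, q (k - 1)`; later values of `q` play no
role. -/
def IsWalk (k : ℕ) (q : ℕ → E) : Prop :=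
  ∀ i, i + 1 < k → te (q i) = ie (q (i + 1))

variable {ie te}

theorem IsWalk.shift {k a l : ℕ} {q : ℕ → E} (hq : IsWalk ie te k q) (h : l + a ≤ k) :
    IsWalk ie te l (fun i => q (i + a)) := fun i hi => by
  simpa only [Nat.add_right_comm] using hq (i + a) (by omega)

variable (ie te) in
def SimpleCyclesPassThrough (u : V) : Prop :=
  ∀ (k : ℕ) (q : ℕ → E), 0 < k → IsWalk ie te k q → te (q (k - 1)) = ie (q 0) →
    (∀ i j, i < k → j < k → ie (q i) = ie (q j) → i = j) → ∃ i < k, ie (q i) = u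

section Cycles

variable {u : V} (hcyc : SimpleCyclesPassThrough ie te u)
include hcyc

theorem exists_ie_eq_of_isWalk_closed {k : ℕ} {q : ℕ → E} (hk : 0 < k) (hq : IsWalk ie te k q)
    (hclosed : te (q (k - 1)) = ie (q 0)) : ∃ i < k, ie (q i) = u := by
  induction k using Nat.strong_induction_on generalizing q with
  | _ k ih =>
  by_cases hsimple : ∀ i j, i < k → j < k → ie (q i) = ie (q j) → i = j
  · exact hcyc k q hk hq hclosed hsimple
  push Not at hsimple
  obtain ⟨i, j, hi, hj, hij, hne⟩ := hsimple
  have of_lt : ∀ a b, a < b → b < k → ie (q a) = ie (q b) → ∃ i < k, ie (q i) = u := by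
    intro a b hab hb heq
    have hsub : IsWalk ie te (b - a) (fun i => q (i + a)) := hq.shift (by omega)
    have hsub_closed : te (q (b - a - 1 + a)) = ie (q (0 + a)) := by
      rw [show b - a - 1 + a = b - 1 by omega, zero_add, heq, hq (b - 1) (by omega),
        Nat.sub_add_cancel (by omega)]
    obtain ⟨l, hl, hlu⟩ := ih (b - a) (by omega) (by omega) hsub hsub_closed
    exact ⟨l + a, by omega, hlu⟩
  rcases hne.lt_or_gt with h | h
  · exact of_lt i j h hj hij
  · exact of_lt j i h hi hij.symm

theorem exists_te_eq_of_isWalk_card [Fintype V] {q : ℕ → E}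
    (hq : IsWalk ie te (Fintype.card V) q) : ∃ i < Fintype.card V, te (q i) = u := by
  classical
  set n := Fintype.card V
  by_contra! havoid
  have hcard : (Finset.univ.erase u).card < (Finset.range n).card := by
    rw [Finset.card_erase_of_mem (Finset.mem_univ u), Finset.card_range, Finset.card_univ]
    exact Nat.sub_lt (Fintype.card_pos_iff.mpr ⟨u⟩) one_pos
  obtain ⟨a, ha, b, hb, hne, heq⟩ := Finset.exists_ne_map_eq_of_card_lt_of_maps_to
    (f := fun i => te (q i)) hcard
    (fun i hi => Finset.mem_erase.mpr ⟨havoid i (Finset.mem_range.mp hi), Finset.mem_univ _⟩)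
  rw [Finset.mem_range] at ha hb
  have of_lt : ∀ a b, a < b → b < n → te (q a) = te (q b) → False := by
    intro a b hab hb heq
    have hsub : IsWalk ie te (b - a) (fun i => q (i + (a + 1))) := hq.shift (by omega)
    have hsub_closed : te (q (b - a - 1 + (a + 1))) = ie (q (0 + (a + 1))) := by
      rw [show b - a - 1 + (a + 1) = b by omega, zero_add, ← heq, hq a (by omega)]
    obtain ⟨l, hl, hlu⟩ := exists_ie_eq_of_isWalk_closed hcyc (by omega) hsub hsub_closed
    rw [← Nat.add_assoc, ← hq (l + a) (by omega)] at hlu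
    exact havoid (l + a) (by omega) hlu
  rcases hne.lt_or_gt with h | h
  · exact of_lt a b h hb heq
  · exact of_lt b a h ha heq.symm

end Cycles

variable (S : E → X → X)

def walkMap : ℕ → (ℕ → E) → X → X
  | 0, _ => id
  | k + 1, q => S (q 0) ∘ walkMap k (fun i => q (i + 1))

theorem walkMap_succ (k : ℕ) (q : ℕ → E) :
    walkMap S (k + 1) q = S (q 0) ∘ walkMap S k (fun i => q (i + 1)) := rfl

variable {S}

theorem walkMap_congr {k : ℕ} {q q' : ℕ → E} (h : ∀ i < k, q i = q' i) :
    walkMap S k q = walkMap S k q' := by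
  induction k generalizing q q' with
  | zero => rfl
  | succ k ih =>
    simp only [walkMap, h 0 k.succ_pos, ih fun i hi => h (i + 1) (by omega)]

theorem isContractingSimilarity_walkMap [PseudoMetricSpace X]
    (hS : ∀ e, IsContractingSimilarity (S e)) (k : ℕ) (q : ℕ → E) :
    IsContractingSimilarity (walkMap S (k + 1) q) := by
  induction k generalizing q with
  | zero => exact hS (q 0)
  | succ k ih => exact (hS (q 0)).comp (ih _)

variable (ie te S) in
def returnMaps (n : ℕ) (u : V) : Set (X → X) :=
  {f | ∃ k < n, ∃ q, IsWalk ie te (k + 1) q ∧ ie (q 0) = u ∧ te (q k) = u ∧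
    walkMap S (k + 1) q = f}

variable (ie te S) in
theorem finite_returnMaps [Finite E] (n : ℕ) (u : V) : (returnMaps ie te S n u).Finite := by
  refine (finite_range fun p : Fin n × (Fin n → E) =>
    walkMap S (p.1 + 1) fun i => p.2 ⟨i % n, Nat.mod_lt _ p.1.pos⟩).subset ?_
  rintro _ ⟨k, hk, q, -, -, -, rfl⟩
  exact ⟨(⟨k, hk⟩, fun i => q i),
    walkMap_congr fun i hi => by simp only [Nat.mod_eq_of_lt (by omega : i < n)]⟩

theorem isContractingSimilarity_of_mem_returnMaps [PseudoMetricSpace X]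
    (hS : ∀ e, IsContractingSimilarity (S e)) {n : ℕ} {u : V} {f : X → X}
    (hf : f ∈ returnMaps ie te S n u) : IsContractingSimilarity f := by
  obtain ⟨k, -, q, -, -, -, rfl⟩ := hf
  exact isContractingSimilarity_walkMap hS k q

variable {F : V → Set X} (hinv : ∀ v, F v = ⋃ e ∈ {e : E | ie e = v}, S e '' F (te e))
include hinv

theorem image_subset_of_invariant (e : E) : S e '' F (te e) ⊆ F (ie e) := by
  rw [hinv (ie e)]
  exact subset_biUnion_of_mem (u := fun e => S e '' F (te e)) (show ie e = ie e from rfl)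

theorem walkMap_image_subset {k : ℕ} {q : ℕ → E} (hq : IsWalk ie te (k + 1) q) :
    walkMap S (k + 1) q '' F (te (q k)) ⊆ F (ie (q 0)) := by
  induction k generalizing q with
  | zero => simpa [walkMap] using image_subset_of_invariant hinv (q 0)
  | succ k ih =>
    rw [walkMap_succ S (k + 1), image_comp]
    refine (image_mono ?_).trans (image_subset_of_invariant hinv (q 0))
    rw [hq 0 (by omega)]
    exact ih (hq.shift (by omega))

theorem walkMap_image_subset_prefix {k i : ℕ} {q : ℕ → E} (hq : IsWalk ie te (k + 1) q)
    (hi : i ≤ k) :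
    walkMap S (k + 1) q '' F (te (q k)) ⊆ walkMap S (i + 1) q '' F (te (q i)) := by
  induction i generalizing k q with
  | zero =>
    rw [walkMap_succ S k, walkMap_succ S 0, image_comp, image_comp]
    refine image_mono ?_
    rcases k with _ | k
    · exact subset_rfl
    · show _ ⊆ id '' _
      rw [image_id, hq 0 (by omega)]
      exact walkMap_image_subset hinv (hq.shift (by omega))
  | succ i ih =>
    obtain ⟨k, rfl⟩ : ∃ k', k = k' + 1 := ⟨k - 1, by omega⟩
    rw [walkMap_succ S (k + 1), walkMap_succ S (i + 1), image_comp, image_comp]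
    exact image_mono (ih (hq.shift (by omega)) (by omega))

theorem exists_isWalk_mem_walkMap_image {v : V} {x : X} (hx : x ∈ F v) (k : ℕ) :
    ∃ q, IsWalk ie te (k + 1) q ∧ ie (q 0) = v ∧
      x ∈ walkMap S (k + 1) q '' F (te (q k)) := by
  induction k generalizing v x with
  | zero =>
    rw [hinv v] at hx
    simp only [mem_iUnion] at hx
    obtain ⟨e, he, hxe⟩ := hx
    exact ⟨fun _ => e, fun i hi => by omega, he, by simpa [walkMap] using hxe⟩
  | succ k ih =>
    rw [hinv v] at hx
    simp only [mem_iUnion] at hx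
    obtain ⟨e, he, y, hy, rfl⟩ := hx
    obtain ⟨q, hq, hq0, hyq⟩ := ih hy
    refine ⟨fun | 0 => e | i + 1 => q i, fun i hi => ?_, he, ?_⟩
    · rcases i with _ | i
      · exact hq0.symm
      · exact hq i (by omega)
    · rw [walkMap_succ S (k + 1), image_comp]
      exact mem_image_of_mem _ hyq

theorem eq_biUnion_returnMaps [Fintype V] {u : V} (hcyc : SimpleCyclesPassThrough ie te u) :
    F u = ⋃ f ∈ returnMaps ie te S (Fintype.card V) u, f '' F u := by
  refine Subset.antisymm (fun x hx => ?_) (iUnion₂_subset ?_)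
  · obtain ⟨n, hn⟩ := Nat.exists_eq_add_one.mpr (Fintype.card_pos_iff.mpr ⟨u⟩)
    obtain ⟨q, hq, hq0, hxq⟩ := exists_isWalk_mem_walkMap_image hinv hx n
    obtain ⟨i, hi, hiu⟩ := exists_te_eq_of_isWalk_card hcyc (by rwa [hn])
    have hxq' := walkMap_image_subset_prefix hinv hq (i := i) (by omega) hxq
    rw [hiu] at hxq'
    exact mem_biUnion ⟨i, hi, q, fun j hj => hq j (by omega), hq0, hiu, rfl⟩ hxq'
  · rintro _ ⟨k, -, q, hq, hq0, hqk, rfl⟩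
    simpa only [hq0, hqk] using walkMap_image_subset hinv hq

end GraphIFS

theorem component_is_standard_attractor_of_cycles_through_u_general
    {V E : Type*} [Fintype V] [Fintype E]
    (ie te : E → V) (S : E → ℝ → ℝ)
    (hsim : ∀ e, ∃ r : ℝ, 0 < r ∧ r < 1 ∧ ∀ x y : ℝ, dist (S e x) (S e y) = r * dist x y)
    (F : V → Set ℝ)
    (hinv : ∀ v, F v = ⋃ e ∈ {e : E | ie e = v}, S e '' F (te e))
    (u : V)
    (hcyc : ∀ (k : ℕ) (q : ℕ → E), 0 < k →
      (∀ i, i + 1 < k → te (q i) = ie (q (i + 1))) →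
      te (q (k - 1)) = ie (q 0) →
      (∀ i j, i < k → j < k → ie (q i) = ie (q j) → i = j) →
      ∃ i < k, ie (q i) = u) :
    ∃ (m : ℕ) (T : Fin m → ℝ → ℝ), 0 < m ∧
      (∀ j, ∃ r : ℝ, 0 < r ∧ r < 1 ∧ ∀ x y : ℝ, dist (T j x) (T j y) = r * dist x y) ∧
      F u = ⋃ j, T j '' F u :=
  exists_fin_family_of_eq_biUnion_image (GraphIFS.finite_returnMaps ie te S _ u)
    (fun _ => GraphIFS.isContractingSimilarity_of_mem_returnMaps hsim)
    (GraphIFS.eq_biUnion_returnMaps hinv hcyc)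

/-- If every simple cycle of the (strongly connected) directed graph of an `n`-vertex
directed graph IFS on `ℝ` passes through the vertex `u`, then `F_u` is the attractor of
a standard (1-vertex) IFS: a finite union of images of itself under contracting
similarities. -/
theorem component_is_standard_attractor_of_cycles_through_u
    {V E : Type*} [Fintype V] [Fintype E]
    (ie te : E → V) (S : E → ℝ → ℝ)
    (hsim : ∀ e, ∃ r : ℝ, 0 < r ∧ r < 1 ∧ ∀ x y : ℝ, dist (S e x) (S e y) = r * dist x y)
    (hout : ∀ v : V, ∃ e : E, ie e = v)
    (hconn : ∀ v w : V, Relation.ReflTransGen (fun p q => ∃ e : E, ie e = p ∧ te e = q) v w)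
    (F : V → Set ℝ)
    (hne : ∀ v, (F v).Nonempty) (hcpt : ∀ v, IsCompact (F v))
    (hinv : ∀ v, F v = ⋃ e ∈ {e : E | ie e = v}, S e '' F (te e))
    (u : V)
    (hcyc : ∀ (k : ℕ) (q : ℕ → E), 0 < k →
      (∀ i, i + 1 < k → te (q i) = ie (q (i + 1))) →
      te (q (k - 1)) = ie (q 0) →
      (∀ i j, i < k → j < k → ie (q i) = ie (q j) → i = j) →
      ∃ i < k, ie (q i) = u) :
    ∃ (m : ℕ) (T : Fin m → ℝ → ℝ), 0 < m ∧
      (∀ j, ∃ r : ℝ, 0 < r ∧ r < 1 ∧ ∀ x y : ℝ, dist (T j x) (T j y) = r * dist x y) ∧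
      F u = ⋃ j, T j '' F u :=
  component_is_standard_attractor_of_cycles_through_u_general ie te S hsim F hinv u hcyc
end

section
/- For the 2-vertex IFS attractor (F_u, F_v) with parameters a, b, c, d, g_u, g_v (positive, a+g_u+b=1, c+g_v+d=1): the maximum gap length of F_u is max{g_u, b·g_v}, and the maximum gap length of F_v is max{g_v, d·g_u}. -/
/-!
The maps `x ↦ a x` and `x ↦ b x + a + g_u` send `[0,1]` into `[0,a]` and `[a+g_u,1]`, so the
two pieces of `F_u` are separated by the gap `[a, a+g_u]` and every other gap of `F_u` is a gap of
one piece. Hence the gap lengths satisfy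
`G(F_u) = {g_u} ∪ a·G(F_u) ∪ b·G(F_v)` and `G(F_v) = {g_v} ∪ c·G(F_v) ∪ d·G(F_u)`.
For the suprema `s`, `t` of these sets this gives `s ≤ max g_u (b t)` and `t ≤ max g_v (d s)`
(the terms `a s`, `c t` cannot be the maximum, as `a, c < 1`), and substituting one bound
into the other, with `b d < 1`, yields `s ≤ max g_u (b g_v)`.
-/

/-- The set of gap lengths of `A ⊆ ℝ`. -/
def gapLengths (A : Set ℝ) : Set ℝ :=
  {l | ∃ p q : ℝ, p ∈ A ∧ q ∈ A ∧ p < q ∧ Set.Ioo p q ∩ A = ∅ ∧ l = q - p}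

def IsGap_s13 (A : Set ℝ) (p q : ℝ) : Prop :=
  p ∈ A ∧ q ∈ A ∧ p < q ∧ Set.Ioo p q ∩ A = ∅

theorem mem_gapLengths {A : Set ℝ} {l : ℝ} :
    l ∈ gapLengths A ↔ ∃ p q, IsGap_s13 A p q ∧ l = q - p := by
  simp only [gapLengths, IsGap_s13, Set.mem_ofPred_eq, and_assoc]

namespace IsGap_s13

variable {A B : Set ℝ} {p q x : ℝ}

theorem notMem (h : IsGap_s13 A p q) (hx : x ∈ Set.Ioo p q) : x ∉ A :=
  fun hxA => h.2.2.2.subset ⟨hx, hxA⟩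

theorem of_subset (h : IsGap_s13 A p q) (hBA : B ⊆ A) (hp : p ∈ B) (hq : q ∈ B) : IsGap_s13 B p q :=
  ⟨hp, hq, h.2.2.1, Set.subset_eq_empty (Set.inter_subset_inter_right _ hBA) h.2.2.2⟩

theorem union (h : IsGap_s13 A p q) (hB : Set.Ioo p q ∩ B = ∅) : IsGap_s13 (A ∪ B) p q :=
  ⟨Or.inl h.1, Or.inl h.2.1, h.2.2.1, by rw [Set.inter_union_distrib_left, h.2.2.2, hB,
    Set.empty_union]⟩

end IsGap_s13

theorem isGap_image_iff {f : ℝ → ℝ} (hf : StrictMono f) {B : Set ℝ} {p q : ℝ} :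
    IsGap_s13 (f '' B) (f p) (f q) ↔ IsGap_s13 B p q := by
  have hpre : f ⁻¹' Set.Ioo (f p) (f q) = Set.Ioo p q := by
    ext x; simp only [Set.mem_preimage, Set.mem_Ioo, hf.lt_iff_lt]
  have hinter : Set.Ioo (f p) (f q) ∩ f '' B = f '' (Set.Ioo p q ∩ B) := by
    rw [Set.inter_comm, ← Set.image_inter_preimage, hpre, Set.inter_comm]
  simp only [IsGap_s13, hf.injective.mem_set_image, hf.lt_iff_lt, hinter, Set.image_eq_empty]

theorem gapLengths_image_mul_add {r : ℝ} (hr : 0 < r) (t : ℝ) (B : Set ℝ) :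
    gapLengths ((fun x => r * x + t) '' B) = (r * ·) '' gapLengths B := by
  have hf : StrictMono fun x => r * x + t := fun x y hxy => by dsimp only; nlinarith
  ext l
  simp only [mem_gapLengths, Set.mem_image]
  constructor
  · rintro ⟨_, _, hgap, rfl⟩
    obtain ⟨p, -, rfl⟩ := hgap.1
    obtain ⟨q, -, rfl⟩ := hgap.2.1
    exact ⟨q - p, ⟨p, q, (isGap_image_iff hf).1 hgap, rfl⟩, by ring⟩
  · rintro ⟨_, ⟨p, q, hgap, rfl⟩, rfl⟩
    exact ⟨_, _, (isGap_image_iff hf).2 hgap, by ring⟩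

theorem gapLengths_union_of_separated {P Q : Set ℝ} {α β : ℝ} (hαβ : α < β)
    (hα : α ∈ P) (hβ : β ∈ Q) (hP : P ⊆ Set.Iic α) (hQ : Q ⊆ Set.Ici β) :
    gapLengths (P ∪ Q) = insert (β - α) (gapLengths P ∪ gapLengths Q) := by
  have hPQ : ∀ x ∈ P, ∀ y ∈ Q, x < y := fun x hx y hy =>
    (hP hx).trans_lt (hαβ.trans_le (hQ hy))
  ext l
  simp only [mem_gapLengths, Set.mem_insert_iff, Set.mem_union]
  constructor
  · rintro ⟨p, q, hgap, rfl⟩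
    rcases hgap.1 with hp | hp <;> rcases hgap.2.1 with hq | hq
    · exact Or.inr (Or.inl ⟨p, q, hgap.of_subset Set.subset_union_left hp hq, rfl⟩)
    · have hpα : p = α := (hP hp).antisymm <| not_lt.1 fun h =>
        hgap.notMem ⟨h, hPQ α hα q hq⟩ (Or.inl hα)
      have hqβ : q = β := le_antisymm (not_lt.1 fun h =>
        hgap.notMem ⟨hPQ p hp β hβ, h⟩ (Or.inr hβ)) (hQ hq)
      exact Or.inl (by rw [hpα, hqβ])
    · exact absurd hgap.2.2.1 (hPQ q hq p hp).not_gt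
    · exact Or.inr (Or.inr ⟨p, q, hgap.of_subset Set.subset_union_right hp hq, rfl⟩)
  · rintro (rfl | ⟨p, q, hgap, rfl⟩ | ⟨p, q, hgap, rfl⟩)
    · refine ⟨α, β, ⟨Or.inl hα, Or.inr hβ, hαβ, ?_⟩, rfl⟩
      refine Set.eq_empty_of_forall_notMem fun x ⟨⟨hαx, hxβ⟩, hx⟩ => ?_
      rcases hx with hx | hx
      · exact (hP hx).not_gt hαx
      · exact (hQ hx).not_gt hxβ
    · refine ⟨p, q, hgap.union (Set.eq_empty_of_forall_notMem fun x ⟨hx, hxQ⟩ => ?_), rfl⟩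
      exact (hPQ q hgap.2.1 x hxQ).not_gt hx.2
    · rw [Set.union_comm]
      refine ⟨p, q, hgap.union (Set.eq_empty_of_forall_notMem fun x ⟨hx, hxP⟩ => ?_), rfl⟩
      exact (hPQ x hxP p hgap.1).not_gt hx.1

theorem gapLengths_eq_insert {a b g : ℝ} (ha : 0 < a) (hb : 0 < b) (hg : 0 < g) {A B : Set ℝ}
    (hA : A ⊆ Set.Iic 1) (hB : B ⊆ Set.Ici 0) (h1 : (1 : ℝ) ∈ A) (h0 : (0 : ℝ) ∈ B)
    (hinv : A = (fun x => a * x) '' A ∪ (fun x => b * x + (a + g)) '' B) :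
    gapLengths A = insert g ((a * ·) '' gapLengths A ∪ (b * ·) '' gapLengths B) := by
  have hP : (fun x => a * x) '' A ⊆ Set.Iic a := by
    rintro _ ⟨y, hy, rfl⟩
    exact mul_le_of_le_one_right ha.le (hA hy)
  have hQ : (fun x => b * x + (a + g)) '' B ⊆ Set.Ici (a + g) := by
    rintro _ ⟨y, hy, rfl⟩
    exact le_add_of_nonneg_left (mul_nonneg hb.le (hB hy))
  have hscale : gapLengths ((fun x => a * x) '' A) = (a * ·) '' gapLengths A := by
    simpa only [add_zero] using gapLengths_image_mul_add ha 0 A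
  calc gapLengths A = gapLengths ((fun x => a * x) '' A ∪ (fun x => b * x + (a + g)) '' B) :=
        congrArg gapLengths hinv
    _ = insert (a + g - a) (gapLengths ((fun x => a * x) '' A) ∪
          gapLengths ((fun x => b * x + (a + g)) '' B)) :=
        gapLengths_union_of_separated (lt_add_of_pos_right a hg) ⟨1, h1, mul_one a⟩
          ⟨0, h0, by simp⟩ hP hQ
    _ = _ := by rw [add_sub_cancel_left, hscale, gapLengths_image_mul_add hb]

theorem bddAbove_gapLengths {A : Set ℝ} {u v : ℝ} (hA : A ⊆ Set.Icc u v) :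
    BddAbove (gapLengths A) := by
  refine ⟨v - u, fun l hl => ?_⟩
  obtain ⟨p, q, hgap, rfl⟩ := mem_gapLengths.1 hl
  linarith [(hA hgap.1).1, (hA hgap.2.1).2]

theorem le_of_le_max_mul {x m r : ℝ} (hr : r < 1) (hm : 0 ≤ m) (h : x ≤ max m (r * x)) :
    x ≤ m := by
  rcases le_max_iff.1 h with h | h
  · exact h
  · nlinarith

theorem csSup_le_of_eq_insert {S T : Set ℝ} {g a b : ℝ}
    (hS : S = insert g ((a * ·) '' S ∪ (b * ·) '' T)) (hSb : BddAbove S) (hTb : BddAbove T)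
    (ha : 0 ≤ a) (hb : 0 ≤ b) :
    sSup S ≤ max (max g (b * sSup T)) (a * sSup S) := by
  have hgS : g ∈ S := by rw [hS]; exact Set.mem_insert _ _
  refine csSup_le ⟨g, hgS⟩ fun x hx => ?_
  rw [hS] at hx
  rcases hx with rfl | ⟨y, hy, rfl⟩ | ⟨y, hy, rfl⟩
  · exact le_max_of_le_left (le_max_left _ _)
  · exact le_max_of_le_right (mul_le_mul_of_nonneg_left (le_csSup hSb hy) ha)
  · exact le_max_of_le_left (le_max_of_le_right (mul_le_mul_of_nonneg_left (le_csSup hTb hy) hb))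

theorem isGreatest_of_eq_insert {S T : Set ℝ} {g g' a b c d : ℝ}
    (hS : S = insert g ((a * ·) '' S ∪ (b * ·) '' T))
    (hT : T = insert g' ((c * ·) '' T ∪ (d * ·) '' S))
    (hSb : BddAbove S) (hTb : BddAbove T) (ha : 0 ≤ a) (ha1 : a < 1) (hb : 0 ≤ b)
    (hc : 0 ≤ c) (hc1 : c < 1) (hd : 0 ≤ d) (hbd : b * d < 1) (hg : 0 ≤ g) (hg' : 0 ≤ g') :
    IsGreatest S (max g (b * g')) := by
  have hgS : g ∈ S := by rw [hS]; exact Set.mem_insert _ _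
  have hg'T : g' ∈ T := by rw [hT]; exact Set.mem_insert _ _
  have hbg'S : b * g' ∈ S := by rw [hS]; exact Or.inr (Or.inr ⟨g', hg'T, rfl⟩)
  have hs : sSup S ≤ max g (b * sSup T) := le_of_le_max_mul ha1 (le_max_of_le_left hg)
    (csSup_le_of_eq_insert hS hSb hTb ha hb)
  have ht : sSup T ≤ max g' (d * sSup S) := le_of_le_max_mul hc1 (le_max_of_le_left hg')
    (csSup_le_of_eq_insert hT hTb hSb hc hd)
  have hsup : sSup S ≤ max g (b * g') := by
    refine le_of_le_max_mul hbd (le_max_of_le_left hg) (hs.trans ?_)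
    calc max g (b * sSup T) ≤ max g (b * max g' (d * sSup S)) := by gcongr
      _ = max (max g (b * g')) (b * d * sSup S) := by
        rw [mul_max_of_nonneg _ _ hb, max_assoc, mul_assoc]
  refine ⟨?_, fun x hx => (le_csSup hSb hx).trans hsup⟩
  rcases max_choice g (b * g') with h | h <;> rw [h]
  · exact hgS
  · exact hbg'S

theorem two_vertex_attractor_max_gap_general
    (a b c d gu gv : ℝ)
    (ha : 0 < a) (hb : 0 < b) (hc : 0 < c) (hd : 0 < d)
    (hgu : 0 < gu) (hgv : 0 < gv)
    (hsum1 : a + gu + b = 1) (hsum2 : c + gv + d = 1)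
    (Fu Fv : Set ℝ)
    (hFu0 : (0:ℝ) ∈ Fu) (hFu1 : (1:ℝ) ∈ Fu) (hFusub : Fu ⊆ Set.Icc 0 1)
    (hFv0 : (0:ℝ) ∈ Fv) (hFv1 : (1:ℝ) ∈ Fv) (hFvsub : Fv ⊆ Set.Icc 0 1)
    (hinvu : Fu = (fun x => a * x) '' Fu ∪ (fun x => b * x + (a + gu)) '' Fv)
    (hinvv : Fv = (fun x => c * x) '' Fv ∪ (fun x => d * x + (c + gv)) '' Fu) :
    IsGreatest (gapLengths Fu) (max gu (b * gv)) ∧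
    IsGreatest (gapLengths Fv) (max gv (d * gu)) := by
  have hS := gapLengths_eq_insert ha hb hgu (hFusub.trans Set.Icc_subset_Iic_self)
    (hFvsub.trans Set.Icc_subset_Ici_self) hFu1 hFv0 hinvu
  have hT := gapLengths_eq_insert hc hd hgv (hFvsub.trans Set.Icc_subset_Iic_self)
    (hFusub.trans Set.Icc_subset_Ici_self) hFv1 hFu0 hinvv
  have hbd : b * d < 1 := by nlinarith
  exact ⟨isGreatest_of_eq_insert hS hT (bddAbove_gapLengths hFusub) (bddAbove_gapLengths hFvsub)
      ha.le (by linarith) hb.le hc.le (by linarith) hd.le hbd hgu.le hgv.le,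
    isGreatest_of_eq_insert hT hS (bddAbove_gapLengths hFvsub) (bddAbove_gapLengths hFusub)
      hc.le (by linarith) hd.le ha.le (by linarith) hb.le (by linarith [mul_comm b d])
      hgv.le hgu.le⟩

/-- The maximum gap length of `F_u` is `max{g_u, b·g_v}` and that of `F_v` is
`max{g_v, d·g_u}`. -/
theorem two_vertex_attractor_max_gap
    (a b c d gu gv : ℝ)
    (ha : 0 < a) (hb : 0 < b) (hc : 0 < c) (hd : 0 < d)
    (hgu : 0 < gu) (hgv : 0 < gv)
    (hsum1 : a + gu + b = 1) (hsum2 : c + gv + d = 1)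
    (Fu Fv : Set ℝ)
    (hFune : Fu.Nonempty) (hFucpt : IsCompact Fu)
    (hFvne : Fv.Nonempty) (hFvcpt : IsCompact Fv)
    (hFu0 : (0:ℝ) ∈ Fu) (hFu1 : (1:ℝ) ∈ Fu) (hFusub : Fu ⊆ Set.Icc 0 1)
    (hFv0 : (0:ℝ) ∈ Fv) (hFv1 : (1:ℝ) ∈ Fv) (hFvsub : Fv ⊆ Set.Icc 0 1)
    (hinvu : Fu = (fun x => a * x) '' Fu ∪ (fun x => b * x + (a + gu)) '' Fv)
    (hinvv : Fv = (fun x => c * x) '' Fv ∪ (fun x => d * x + (c + gv)) '' Fu) :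
    IsGreatest (gapLengths Fu) (max gu (b * gv)) ∧
    IsGreatest (gapLengths Fv) (max gv (d * gu)) :=
  two_vertex_attractor_max_gap_general a b c d gu gv ha hb hc hd hgu hgv hsum1 hsum2 Fu Fv hFu0 hFu1
    hFusub hFv0 hFv1 hFvsub hinvu hinvv
end

section
/- Let F ⊆ [0,1] be compact with {0,1} ⊆ F, and suppose m = max G(F) (the maximum gap length of F) exists. Let S(x) = r·x + t with 0 < r < 1 be a similarity such that S(F) ⊆ F. If [p, q] is a gap interval of F with [p,q] ⊆ S([0,1]) then q − p ≤ r·m. -/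
/-!
Write `p = S a`, `q = S b`. Since `S` is increasing and maps `F` into itself, `(a, b)` misses `F`.
Widening `[a, b]` to the nearest points `a' ≤ a` and `b' ≥ b` of `F` (they exist as `0, 1 ∈ F` and
`F` is compact) gives a gap of `F`, so `q - p = r (b - a) ≤ r (b' - a') ≤ r m`.
-/

open Set

theorem Ioo_inter_eq_empty_of_image_subset {α : Type*} [Preorder α] {f : α → α}
    (hf : StrictMono f) {F : Set α} (hfF : f '' F ⊆ F) {a b : α}
    (hgap : Ioo (f a) (f b) ∩ F = ∅) : Ioo a b ∩ F = ∅ := by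
  refine eq_empty_of_forall_notMem fun x ⟨⟨hax, hxb⟩, hxF⟩ => ?_
  exact hgap.subset ⟨⟨hf hax, hf hxb⟩, hfF (mem_image_of_mem f hxF)⟩

theorem IsCompact.exists_Ioo_inter_eq_empty_superset {α : Type*} [LinearOrder α]
    [TopologicalSpace α] [OrderClosedTopology α] {F : Set α} (hF : IsCompact F) {a b : α}
    (ha : (F ∩ Iic a).Nonempty) (hb : (F ∩ Ici b).Nonempty) (hgap : Ioo a b ∩ F = ∅) :
    ∃ a' ∈ F, ∃ b' ∈ F, a' ≤ a ∧ b ≤ b' ∧ Ioo a' b' ∩ F = ∅ := by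
  obtain ⟨a', ⟨ha'F, ha'a⟩, ha'max⟩ := (hF.inter_right isClosed_Iic).exists_isGreatest ha
  obtain ⟨b', ⟨hb'F, hbb'⟩, hb'min⟩ := (hF.inter_right isClosed_Ici).exists_isLeast hb
  refine ⟨a', ha'F, b', hb'F, ha'a, hbb', eq_empty_of_forall_notMem ?_⟩
  rintro x ⟨⟨ha'x, hxb'⟩, hxF⟩
  rcases le_or_gt x a with hxa | hax
  · exact (ha'max ⟨hxF, hxa⟩).not_gt ha'x
  rcases le_or_gt b x with hbx | hxb
  · exact (hb'min ⟨hxF, hbx⟩).not_gt hxb'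
  · exact hgap.subset ⟨⟨hax, hxb⟩, hxF⟩

theorem gap_in_image_le_general
    (F : Set ℝ) (hcpt : IsCompact F)
    (h0 : (0:ℝ) ∈ F) (h1 : (1:ℝ) ∈ F)
    (m : ℝ)
    (hm : IsGreatest {l : ℝ | ∃ p q : ℝ, p ∈ F ∧ q ∈ F ∧ p < q ∧
      Set.Ioo p q ∩ F = ∅ ∧ l = q - p} m)
    (r t : ℝ) (hr0 : 0 < r)
    (hSF : (fun x => r * x + t) '' F ⊆ F)
    (p q : ℝ) (hpq : p < q)
    (hgap : Set.Ioo p q ∩ F = ∅)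
    (hspan : Set.Icc p q ⊆ (fun x => r * x + t) '' Set.Icc 0 1) :
    q - p ≤ r * m := by
  have hS : StrictMono fun x => r * x + t := (strictMono_mul_left_of_pos hr0).add_const t
  obtain ⟨a, ⟨ha0, -⟩, rfl⟩ := hspan (left_mem_Icc.2 hpq.le)
  obtain ⟨b, ⟨-, hb1⟩, rfl⟩ := hspan (right_mem_Icc.2 hpq.le)
  have hab : a < b := hS.lt_iff_lt.1 hpq
  obtain ⟨a', ha'F, b', hb'F, ha'a, hbb', hgap'⟩ :=
    hcpt.exists_Ioo_inter_eq_empty_superset ⟨0, h0, ha0⟩ ⟨1, h1, hb1⟩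
      (Ioo_inter_eq_empty_of_image_subset hS hSF hgap)
  have hm' : b' - a' ≤ m :=
    hm.2 ⟨a', b', ha'F, hb'F, ha'a.trans_lt (hab.trans_le hbb'), hgap', rfl⟩
  calc (r * b + t) - (r * a + t) = r * (b - a) := by ring
    _ ≤ r * (b' - a') := by gcongr
    _ ≤ r * m := by gcongr

/-- If `S(F) ⊆ F` for a similarity `S(x) = r·x + t` with ratio `r ∈ (0,1)`, `F ⊆ [0,1]`
compact containing `0,1` with maximum gap length `m`, then any gap interval `[p,q]` of `F`
contained in `S([0,1])` has length at most `r·m`. -/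
theorem gap_in_image_le
    (F : Set ℝ) (hcpt : IsCompact F) (hsub : F ⊆ Set.Icc 0 1)
    (h0 : (0:ℝ) ∈ F) (h1 : (1:ℝ) ∈ F)
    (m : ℝ)
    (hm : IsGreatest {l : ℝ | ∃ p q : ℝ, p ∈ F ∧ q ∈ F ∧ p < q ∧
      Set.Ioo p q ∩ F = ∅ ∧ l = q - p} m)
    (r t : ℝ) (hr0 : 0 < r) (hr1 : r < 1)
    (hSF : (fun x => r * x + t) '' F ⊆ F)
    (p q : ℝ) (hp : p ∈ F) (hq : q ∈ F) (hpq : p < q)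
    (hgap : Set.Ioo p q ∩ F = ∅)
    (hspan : Set.Icc p q ⊆ (fun x => r * x + t) '' Set.Icc 0 1) :
    q - p ≤ r * m :=
  gap_in_image_le_general F hcpt h0 h1 m hm r t hr0 hSF p q hpq hgap hspan
end

section
/- For the 2-vertex IFS attractor (F_u, F_v) of Figure 1, if S : ℝ → ℝ is an orientation-preserving contracting similarity with ratio r ∈ (0,1) such that S(F_u) ⊆ F_u and S([0,1]) spans the level-1 gap (i.e., [a, a+g_u] ⊆ S([0,1])), then g_u < b·g_v. -/
/-!
Every subinterval of `[0, 1]` of length at least `max g_u (b g_v)` meets `F_u` (and symmetrically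
for `F_v`): such an interval either contains one of the endpoints `a`, `a + g_u` of the level-1
gap, or lies inside `S₁([0,1])` or `S₂([0,1])` and pulls back to a longer interval meeting `F_u`
or `F_v`; induction on the scale makes this rigorous. Since `S` maps `F_u` into `F_u`, the
preimage under `S` of the open gap `(a, a + g_u)` is an interval of length `g_u / r` missing
`F_u`, so `g_u ≤ r · max g_u (b g_v)`, which rules out the case `max = g_u` because `r < 1`.
-/

open Set

/-- The lower bound `ε` on the length is the induction parameter: each level of the
self-similarity lengthens pulled-back intervals by a factor at least `1 / ρ`. -/
def MeetsIntervals (F : Set ℝ) (M ε : ℝ) : Prop :=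
  ∀ ⦃x y : ℝ⦄, 0 ≤ x → y ≤ 1 → M ≤ y - x → ε < y - x → (F ∩ Icc x y).Nonempty

namespace MeetsIntervals

theorem of_one (F : Set ℝ) (M : ℝ) : MeetsIntervals F M 1 := by
  intro x y hx hy _ hlen
  linarith

theorem of_forall_pow {F : Set ℝ} {M ρ : ℝ} (hM : 0 < M) (hρ : ρ < 1)
    (h : ∀ n : ℕ, MeetsIntervals F M (ρ ^ n)) : MeetsIntervals F M 0 := by
  intro x y hx hy hMxy _
  obtain ⟨n, hn⟩ := exists_pow_lt_of_lt_one (hM.trans_le hMxy) hρ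
  exact h n hx hy hMxy hn

theorem of_mapsTo {F F' : Set ℝ} {s t M ε x y : ℝ} (h : MeetsIntervals F' M ε) (hs : 0 < s)
    (hf : MapsTo (fun q => s * q + t) F' F) (hx : t ≤ x) (hy : y ≤ s + t)
    (hM : s * M ≤ y - x) (hε : s * ε < y - x) : (F ∩ Icc x y).Nonempty := by
  have hlen : (y - t) / s - (x - t) / s = (y - x) / s := by ring
  obtain ⟨q, hq, hxq, hqy⟩ := h (x := (x - t) / s) (y := (y - t) / s)
    (div_nonneg (by linarith) hs.le) (by rw [div_le_one hs]; linarith)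
    (by rw [hlen, le_div_iff₀ hs]; linarith) (by rw [hlen, lt_div_iff₀ hs]; linarith)
  rw [div_le_iff₀ hs] at hxq
  rw [le_div_iff₀ hs] at hqy
  exact ⟨s * q + t, hf hq, by linarith, by linarith⟩

theorem step {F F' : Set ℝ} {a b g M M' ε ρ : ℝ} (ha : 0 < a) (hb : 0 < b) (hg : 0 ≤ g)
    (hsum : a + g + b = 1)
    (hF : (fun x => a * x) '' F ∪ (fun x => b * x + (a + g)) '' F' ⊆ F)
    (hF1 : (1 : ℝ) ∈ F) (hF'0 : (0 : ℝ) ∈ F') (hgM : g ≤ M) (hbM : b * M' ≤ M)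
    (haρ : a ≤ ρ) (hbρ : b ≤ ρ) (hε : 0 ≤ ε)
    (hu : MeetsIntervals F M ε) (hv : MeetsIntervals F' M' ε) :
    MeetsIntervals F M (ρ * ε) := by
  have hS₁ : MapsTo (fun x => a * x + 0) F F := fun q hq => by
    simpa using hF (Or.inl (mem_image_of_mem _ hq))
  have hS₂ : MapsTo (fun x => b * x + (a + g)) F' F := fun q hq =>
    hF (Or.inr (mem_image_of_mem _ hq))
  intro x y hx hy hMxy hεxy
  have haε : a * ε ≤ ρ * ε := mul_le_mul_of_nonneg_right haρ hε
  have hbε : b * ε ≤ ρ * ε := mul_le_mul_of_nonneg_right hbρ hε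
  by_cases hya : y ≤ a
  · have haM : a * M ≤ M := mul_le_of_le_one_left (hg.trans hgM) (by linarith)
    exact hu.of_mapsTo ha hS₁ (by linarith) (by linarith) (by linarith) (by linarith)
  by_cases hxg : a + g ≤ x
  · exact hv.of_mapsTo hb hS₂ hxg (by linarith) (by linarith) (by linarith)
  rw [not_le] at hya hxg
  by_cases hxa : x ≤ a
  · exact ⟨a, by simpa using hS₁ hF1, hxa, hya.le⟩
  · exact ⟨a + g, by simpa using hS₂ hF'0, hxg.le, by linarith⟩

end MeetsIntervals

theorem mul_max_le_max_of_mul_le_one {b d x y : ℝ} (hb : 0 ≤ b) (hbd : b * d ≤ 1) (hx : 0 ≤ x) :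
    b * max y (d * x) ≤ max x (b * y) := by
  rw [mul_max_of_nonneg _ _ hb]
  exact max_le (le_max_right _ _) (le_max_of_le_left (by nlinarith))

theorem meetsIntervals_of_union_subset {Fu Fv : Set ℝ} {a b c d gu gv : ℝ}
    (ha : 0 < a) (hb : 0 < b) (hc : 0 < c) (hd : 0 < d) (hgu : 0 < gu) (hgv : 0 < gv)
    (hsum1 : a + gu + b = 1) (hsum2 : c + gv + d = 1)
    (hFu0 : (0 : ℝ) ∈ Fu) (hFu1 : (1 : ℝ) ∈ Fu) (hFv0 : (0 : ℝ) ∈ Fv) (hFv1 : (1 : ℝ) ∈ Fv)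
    (hinvu : (fun x => a * x) '' Fu ∪ (fun x => b * x + (a + gu)) '' Fv ⊆ Fu)
    (hinvv : (fun x => c * x) '' Fv ∪ (fun x => d * x + (c + gv)) '' Fu ⊆ Fv) :
    MeetsIntervals Fu (max gu (b * gv)) 0 ∧ MeetsIntervals Fv (max gv (d * gu)) 0 := by
  set ρ := max (max a b) (max c d)
  have hρ1 : ρ < 1 :=
    max_lt (max_lt (by linarith) (by linarith)) (max_lt (by linarith) (by linarith))
  have haρ : a ≤ ρ := le_max_of_le_left (le_max_left _ _)
  have hbρ : b ≤ ρ := le_max_of_le_left (le_max_right _ _)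
  have hcρ : c ≤ ρ := le_max_of_le_right (le_max_left _ _)
  have hdρ : d ≤ ρ := le_max_of_le_right (le_max_right _ _)
  have hbd : b * d ≤ 1 := by nlinarith
  have hpow : ∀ n : ℕ, MeetsIntervals Fu (max gu (b * gv)) (ρ ^ n) ∧
      MeetsIntervals Fv (max gv (d * gu)) (ρ ^ n) := by
    intro n
    induction n with
    | zero => exact ⟨.of_one _ _, .of_one _ _⟩
    | succ n ih =>
      have hε : 0 ≤ ρ ^ n := pow_nonneg (ha.le.trans haρ) n
      rw [pow_succ']
      exact ⟨ih.1.step ha hb hgu.le hsum1 hinvu hFu1 hFv0 (le_max_left _ _)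
          (mul_max_le_max_of_mul_le_one hb.le hbd hgu.le) haρ hbρ hε ih.2,
        ih.2.step hc hd hgv.le hsum2 hinvv hFv1 hFu0 (le_max_left _ _)
          (mul_max_le_max_of_mul_le_one hd.le (by linarith) hgv.le) hcρ hdρ hε ih.1⟩
  exact ⟨.of_forall_pow (lt_max_of_lt_left hgu) hρ1 fun n => (hpow n).1,
    .of_forall_pow (lt_max_of_lt_left hgv) hρ1 fun n => (hpow n).2⟩

theorem disjoint_Ioo_of_subset_union {F F' : Set ℝ} {a b g : ℝ} (ha : 0 ≤ a) (hb : 0 ≤ b)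
    (hF : F ⊆ (fun x => a * x) '' F ∪ (fun x => b * x + (a + g)) '' F')
    (hF1 : F ⊆ Iic 1) (hF'0 : F' ⊆ Ici 0) : Disjoint F (Ioo a (a + g)) := by
  refine disjoint_left.mpr fun p hp hpI => ?_
  rcases hF hp with ⟨q, hq, rfl⟩ | ⟨q, hq, rfl⟩
  · have : q ≤ 1 := hF1 hq
    nlinarith [hpI.1]
  · have : 0 ≤ q := hF'0 hq
    nlinarith [hpI.2]

theorem le_mul_of_disjoint_Ioo {F G : Set ℝ} {r t p g M : ℝ} (hr : 0 < r) (hM : 0 < M)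
    (hF : MeetsIntervals F M 0) (hS : MapsTo (fun x => r * x + t) F G)
    (hgap : Disjoint G (Ioo p (p + g))) (hp : t ≤ p) (hpg : p + g ≤ r + t) : g ≤ r * M := by
  by_contra! h
  have hrM : 0 < r * M := mul_pos hr hM
  set δ := (g - r * M) / 2 with hδ
  obtain ⟨q, hqG, hxq, hqy⟩ := hF.of_mapsTo (x := p + δ) (y := p + g - δ) hr hS
    (by linarith) (by linarith) (by linarith) (by linarith)
  exact disjoint_left.mp hgap hqG ⟨by linarith, by linarith⟩

theorem span_gap_self_implies_general
    (a b c d gu gv : ℝ)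
    (ha : 0 < a) (hb : 0 < b) (hc : 0 < c) (hd : 0 < d)
    (hgu : 0 < gu) (hgv : 0 < gv)
    (hsum1 : a + gu + b = 1) (hsum2 : c + gv + d = 1)
    (Fu Fv : Set ℝ)
    (hFu0 : (0:ℝ) ∈ Fu) (hFu1 : (1:ℝ) ∈ Fu) (hFusub : Fu ⊆ Set.Icc 0 1)
    (hFv0 : (0:ℝ) ∈ Fv) (hFv1 : (1:ℝ) ∈ Fv) (hFvsub : Fv ⊆ Set.Icc 0 1)
    (hinvu : Fu = (fun x => a * x) '' Fu ∪ (fun x => b * x + (a + gu)) '' Fv)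
    (hinvv : Fv = (fun x => c * x) '' Fv ∪ (fun x => d * x + (c + gv)) '' Fu)
    (r t : ℝ) (hr0 : 0 < r) (hr1 : r < 1)
    (hSF : (fun x => r * x + t) '' Fu ⊆ Fu)
    (hspan : Set.Icc a (a + gu) ⊆ (fun x => r * x + t) '' Set.Icc 0 1) :
    gu < b * gv := by
  have hdense := (meetsIntervals_of_union_subset ha hb hc hd hgu hgv hsum1 hsum2
    hFu0 hFu1 hFv0 hFv1 hinvu.ge hinvv.ge).1
  have hgap : Disjoint Fu (Ioo a (a + gu)) :=
    disjoint_Ioo_of_subset_union ha.le hb.le hinvu.le (fun _ h => (hFusub h).2)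
      (fun _ h => (hFvsub h).1)
  rw [image_affine_Icc' hr0, Icc_subset_Icc_iff (by linarith)] at hspan
  have hle : gu ≤ r * max gu (b * gv) :=
    le_mul_of_disjoint_Ioo hr0 (lt_max_of_lt_left hgu) hdense (mapsTo_iff_image_subset.mpr hSF)
      hgap (by linarith [hspan.1]) (by linarith [hspan.2])
  rcases max_cases gu (b * gv) with ⟨hmax, _⟩ | ⟨_, hlt⟩
  · rw [hmax] at hle
    nlinarith
  · exact hlt

/-- If an orientation-preserving contracting similarity `S` maps `F_u` into `F_u` and
`S([0,1])` spans the level-1 gap `[a, a+g_u]`, then `g_u < b·g_v`. -/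
theorem span_gap_self_implies
    (a b c d gu gv : ℝ)
    (ha : 0 < a) (hb : 0 < b) (hc : 0 < c) (hd : 0 < d)
    (hgu : 0 < gu) (hgv : 0 < gv)
    (hsum1 : a + gu + b = 1) (hsum2 : c + gv + d = 1)
    (Fu Fv : Set ℝ)
    (hFune : Fu.Nonempty) (hFucpt : IsCompact Fu)
    (hFvne : Fv.Nonempty) (hFvcpt : IsCompact Fv)
    (hFu0 : (0:ℝ) ∈ Fu) (hFu1 : (1:ℝ) ∈ Fu) (hFusub : Fu ⊆ Set.Icc 0 1)
    (hFv0 : (0:ℝ) ∈ Fv) (hFv1 : (1:ℝ) ∈ Fv) (hFvsub : Fv ⊆ Set.Icc 0 1)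
    (hinvu : Fu = (fun x => a * x) '' Fu ∪ (fun x => b * x + (a + gu)) '' Fv)
    (hinvv : Fv = (fun x => c * x) '' Fv ∪ (fun x => d * x + (c + gv)) '' Fu)
    (r t : ℝ) (hr0 : 0 < r) (hr1 : r < 1)
    (hSF : (fun x => r * x + t) '' Fu ⊆ Fu)
    (hspan : Set.Icc a (a + gu) ⊆ (fun x => r * x + t) '' Set.Icc 0 1) :
    gu < b * gv :=
  span_gap_self_implies_general a b c d gu gv ha hb hc hd hgu hgv hsum1 hsum2 Fu Fv hFu0 hFu1 hFusub
    hFv0 hFv1 hFvsub hinvu hinvv r t hr0 hr1 hSF hspan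
end

section
/- Consider the 2-vertex IFS of Figure 5 with maps S₁(x)=ax, S₂(x)=bx+a+g_u on vertex u (F_u = S₁(F_u) ∪ S₂(F_v)) and S₃(x)=ax, S₄(x)=c x + a + g_w, S₅(x)=bx+a+g_u on vertex v (F_v = S₃(F_u) ∪ S₄(F_u) ∪ S₅(F_v)), where S₁ = S₃ and S₂ = S₅ and the images at each vertex are disjoint. Then F_v = F_u ∪ S₄(F_u); in particular F_u ⊆ F_v and F_u ≠ F_v, and F_u = S₁(F_u) ∪ S₂(F_u) ∪ (S₂∘S₄)(F_u), so F_u is the attractor of a standard 3-map IFS. -/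
/-!
Since `S₃ = S₁` and `S₅ = S₂`, the invariance equation at `v` is the one at `u` with the extra
piece `S₄(F_u)`, so `F_v = F_u ∪ S₄(F_u)`; substituting this into the equation at `u` gives the
3-map IFS `{S₁, S₂, S₂ ∘ S₄}`. The point `S₄(0) = a + g_w` lies in `F_v` but in the gap
`(a, a + g_u)` between `S₁([0,1])` and `S₂([0,1])`, hence not in `F_u`.
-/

open Set

section SharedMaps

variable {α : Type*} {S₁ S₂ S₄ : α → α} {Fu Fv : Set α}

theorem eq_union_image_of_shared_maps (hu : Fu = S₁ '' Fu ∪ S₂ '' Fv)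
    (hv : Fv = S₁ '' Fu ∪ S₄ '' Fu ∪ S₂ '' Fv) : Fv = Fu ∪ S₄ '' Fu := by
  rw [hv, union_right_comm, ← hu]

theorem eq_three_map_union_of_eq_union_image (hu : Fu = S₁ '' Fu ∪ S₂ '' Fv)
    (hv : Fv = Fu ∪ S₄ '' Fu) : Fu = S₁ '' Fu ∪ S₂ '' Fu ∪ (S₂ ∘ S₄) '' Fu := by
  conv_lhs => rw [hu, hv]
  rw [image_union, image_comp, union_assoc]

end SharedMaps

theorem notMem_of_mem_gap {a b gu x : ℝ} {Fu Fv : Set ℝ} (ha : 0 ≤ a) (hb : 0 ≤ b)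
    (hx : x ∈ Ioo a (a + gu)) (hFu : Fu ⊆ Icc 0 1) (hFv : Fv ⊆ Icc 0 1)
    (hinvu : Fu = (fun x => a * x) '' Fu ∪ (fun x => b * x + (a + gu)) '' Fv) : x ∉ Fu := by
  rw [hinvu]
  rintro (⟨y, hy, rfl⟩ | ⟨y, hy, rfl⟩)
  · linarith [hx.1, mul_le_of_le_one_right ha (hFu hy).2]
  · linarith [hx.2, mul_nonneg hb (hFv hy).1]

theorem figure5_attractor_structure_general
    (a b c gu gw : ℝ)
    (ha : 0 < a) (hb : 0 < b) (hc : 0 < c) (hgw : 0 < gw)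
    (hgap : gw + c < gu)
    (Fu Fv : Set ℝ)
    (hFu0 : (0:ℝ) ∈ Fu) (hFusub : Fu ⊆ Set.Icc 0 1)
    (hFvsub : Fv ⊆ Set.Icc 0 1)
    (hinvu : Fu = (fun x => a * x) '' Fu ∪ (fun x => b * x + (a + gu)) '' Fv)
    (hinvv : Fv = (fun x => a * x) '' Fu ∪ (fun x => c * x + (a + gw)) '' Fu ∪
      (fun x => b * x + (a + gu)) '' Fv) :
    Fv = Fu ∪ (fun x => c * x + (a + gw)) '' Fu ∧
    Fu ⊆ Fv ∧ Fu ≠ Fv ∧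
    Fu = (fun x => a * x) '' Fu ∪ (fun x => b * x + (a + gu)) '' Fu ∪
      ((fun x => b * x + (a + gu)) ∘ (fun x => c * x + (a + gw))) '' Fu := by
  have hFv := eq_union_image_of_shared_maps hinvu hinvv
  have hS₄0_mem : a + gw ∈ Fv := hFv ▸ Or.inr ⟨0, hFu0, by ring⟩
  have hS₄0_gap : a + gw ∈ Ioo a (a + gu) := ⟨by linarith, by linarith⟩
  refine ⟨hFv, hFv ▸ subset_union_left, fun h => ?_, eq_three_map_union_of_eq_union_image hinvu hFv⟩
  exact notMem_of_mem_gap ha.le hb.le hS₄0_gap hFusub hFvsub hinvu (h ▸ hS₄0_mem)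

/-- For the 2-vertex IFS of Figure 5 (with `S₃ = S₁`, `S₅ = S₂`, and `S₄` mapping into the
level-1 gap of `F_u`): `F_v = F_u ∪ S₄(F_u)`, `F_u ⊆ F_v`, `F_u ≠ F_v`, and `F_u` is the
attractor of the standard 3-map IFS `{S₁, S₂, S₂∘S₄}`. -/
theorem figure5_attractor_structure
    (a b c gu gw : ℝ)
    (ha : 0 < a) (hb : 0 < b) (hc : 0 < c) (hgu : 0 < gu) (hgw : 0 < gw)
    (hsum : a + gu + b = 1) (hgap : gw + c < gu)
    (Fu Fv : Set ℝ)
    (hFune : Fu.Nonempty) (hFucpt : IsCompact Fu)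
    (hFvne : Fv.Nonempty) (hFvcpt : IsCompact Fv)
    (hFu0 : (0:ℝ) ∈ Fu) (hFu1 : (1:ℝ) ∈ Fu) (hFusub : Fu ⊆ Set.Icc 0 1)
    (hFv0 : (0:ℝ) ∈ Fv) (hFv1 : (1:ℝ) ∈ Fv) (hFvsub : Fv ⊆ Set.Icc 0 1)
    (hinvu : Fu = (fun x => a * x) '' Fu ∪ (fun x => b * x + (a + gu)) '' Fv)
    (hinvv : Fv = (fun x => a * x) '' Fu ∪ (fun x => c * x + (a + gw)) '' Fu ∪
      (fun x => b * x + (a + gu)) '' Fv) :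
    Fv = Fu ∪ (fun x => c * x + (a + gw)) '' Fu ∧
    Fu ⊆ Fv ∧ Fu ≠ Fv ∧
    Fu = (fun x => a * x) '' Fu ∪ (fun x => b * x + (a + gu)) '' Fu ∪
      ((fun x => b * x + (a + gu)) ∘ (fun x => c * x + (a + gw))) '' Fu :=
  figure5_attractor_structure_general a b c gu gw ha hb hc hgw hgap Fu Fv hFu0 hFusub hFvsub hinvu
    hinvv
end
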